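/- arXiv:1410.4079 — 7 statements merged into one kernel-verified Lean document; each statement's English description precedes it below -/
import Mathlib

section
/- For every ε ∈ (0, p] there exist C₀ > 0 and s̄₀ > 0, depending only on a, μ, p, ε, such that for all s ≥ s̄₀ and all z ∈ ℝ: | e^{-ps/(p-1)} h( e^{s/(p-1)} z ) | ≤ (C₀ / s^a) ( |z|^p + |z|^{p-ε} ). -/
/-!
With `λ = exp (s / (p - 1))` the rescaled term has modulus `|μ| |z|^p / log (2 + λ² z²)^a`.
If `|z| ≥ λ^(-1/2)` the logarithm is at least `s / (p - 1)`, which gives the `|z|^p / s^a`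
part. Otherwise the logarithm is only bounded below by `log 2`, but then
`|z|^ε ≤ exp (-ε s / (2 (p - 1)))`, and this exponential decay beats `s^(-a)` for large `s`.
-/

open Real Filter

noncomputable def hfun (p a μ : ℝ) (z : ℝ) : ℝ :=
  μ * |z| ^ (p - 1) * z / (Real.log (2 + z ^ 2)) ^ a

lemma log_two_le_log_two_add_sq (y : ℝ) : log 2 ≤ log (2 + y ^ 2) :=
  log_le_log two_pos (by nlinarith [sq_nonneg y])

lemma log_two_add_sq_pos (y : ℝ) : 0 < log (2 + y ^ 2) :=
  (log_pos one_lt_two).trans_le (log_two_le_log_two_add_sq y)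

lemma two_mul_le_log_two_add_sq {x y : ℝ} (h : exp x ≤ |y|) : 2 * x ≤ log (2 + y ^ 2) := by
  have hsq : exp (2 * x) ≤ y ^ 2 := by
    rw [← sq_abs, mul_comm, exp_mul, rpow_two]
    exact pow_le_pow_left₀ (exp_pos x).le h 2
  rw [← log_exp (2 * x)]
  exact log_le_log (exp_pos _) (by linarith)

lemma abs_hfun {p : ℝ} (hp : p ≠ 0) (a μ z : ℝ) :
    |hfun p a μ z| = |μ| * |z| ^ p / log (2 + z ^ 2) ^ a := by
  have hpow : |z| ^ (p - 1) * |z| = |z| ^ p := by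
    conv_rhs => rw [← sub_add_cancel p 1, rpow_add' (abs_nonneg z) (by simpa using hp), rpow_one]
  rw [hfun, abs_div, abs_mul, abs_mul, abs_of_nonneg (rpow_nonneg (abs_nonneg z) _),
    abs_of_pos (rpow_pos_of_pos (log_two_add_sq_pos z) a), mul_assoc, hpow]

lemma abs_exp_mul_hfun_exp_mul {p : ℝ} (hp : 1 < p) (a μ s z : ℝ) :
    |exp (-p * s / (p - 1)) * hfun p a μ (exp (s / (p - 1)) * z)| =
      |μ| * |z| ^ p / log (2 + (exp (s / (p - 1)) * z) ^ 2) ^ a := by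
  have hcancel : exp (-p * s / (p - 1)) * exp (s / (p - 1) * p) = 1 := by
    rw [← exp_add, ← exp_zero]; congr 1; ring
  rw [abs_mul, abs_exp, abs_hfun (by positivity), abs_mul, abs_exp,
    mul_rpow (exp_pos _).le (abs_nonneg z), ← exp_mul]
  linear_combination (|μ| * |z| ^ p / log (2 + (exp (s / (p - 1)) * z) ^ 2) ^ a) * hcancel

lemma rpow_div_log_two_add_sq_le {p a ε τ : ℝ} (hp : p ≠ 0) (ha : 0 ≤ a) (hε : 0 ≤ ε)
    (hτ : 0 < τ) (z : ℝ) :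
    |z| ^ p / log (2 + (exp τ * z) ^ 2) ^ a ≤
      |z| ^ p / τ ^ a + exp (-(ε * τ / 2)) * |z| ^ (p - ε) / log 2 ^ a := by
  have hzp : 0 ≤ |z| ^ p := rpow_nonneg (abs_nonneg z) p
  rcases le_or_gt (exp (-(τ / 2))) |z| with hlarge | hsmall
  · have hτL : τ ≤ log (2 + (exp τ * z) ^ 2) := by
      have hexp : exp (τ / 2) ≤ |exp τ * z| := by
        rw [abs_mul, abs_exp, show τ / 2 = τ + -(τ / 2) by ring, exp_add]
        exact mul_le_mul_of_nonneg_left hlarge (exp_pos τ).le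
      linarith [two_mul_le_log_two_add_sq hexp]
    have : |z| ^ p / log (2 + (exp τ * z) ^ 2) ^ a ≤ |z| ^ p / τ ^ a :=
      div_le_div_of_nonneg_left hzp (by positivity) (rpow_le_rpow hτ.le hτL ha)
    have hsmall_term : 0 ≤ exp (-(ε * τ / 2)) * |z| ^ (p - ε) / log 2 ^ a := by positivity
    linarith
  · have hzε : |z| ^ ε ≤ exp (-(ε * τ / 2)) := by
      rw [show -(ε * τ / 2) = -(τ / 2) * ε by ring, exp_mul]
      exact rpow_le_rpow (abs_nonneg z) hsmall.le hε
    have hsplit : |z| ^ p = |z| ^ ε * |z| ^ (p - ε) := by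
      rw [← rpow_add' (abs_nonneg z) (by simpa using hp)]; ring_nf
    calc |z| ^ p / log (2 + (exp τ * z) ^ 2) ^ a ≤ |z| ^ p / log 2 ^ a :=
          div_le_div_of_nonneg_left hzp (by positivity)
            (rpow_le_rpow (log_pos one_lt_two).le (log_two_le_log_two_add_sq _) ha)
      _ ≤ exp (-(ε * τ / 2)) * |z| ^ (p - ε) / log 2 ^ a := by
          rw [hsplit]; gcongr
      _ ≤ _ := by linarith [div_nonneg hzp (rpow_nonneg hτ.le a)]

lemma eventually_exp_neg_mul_le_inv_rpow {c : ℝ} (hc : 0 < c) (a : ℝ) :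
    ∀ᶠ s in atTop, exp (-c * s) ≤ (s ^ a)⁻¹ := by
  filter_upwards [(isLittleO_exp_neg_mul_rpow_atTop hc (-a)).bound one_pos,
    eventually_gt_atTop 0] with s hbound hs
  simpa [abs_of_pos (rpow_pos_of_pos hs _), rpow_neg hs.le] using hbound

lemma abs_exp_mul_hfun_exp_mul_le {p a ε s : ℝ} (hp : 1 < p) (ha : 0 ≤ a) (hε : 0 ≤ ε)
    (hs : 0 < s) (hdecay : exp (-(ε / (2 * (p - 1))) * s) ≤ (s ^ a)⁻¹) (μ z : ℝ) :
    |exp (-p * s / (p - 1)) * hfun p a μ (exp (s / (p - 1)) * z)| ≤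
      |μ| * ((p - 1) ^ a * |z| ^ p + (log 2 ^ a)⁻¹ * |z| ^ (p - ε)) / s ^ a := by
  have hp1 : 0 < p - 1 := sub_pos.2 hp
  have hdecay' : exp (-(ε * (s / (p - 1)) / 2)) ≤ (s ^ a)⁻¹ := by
    convert hdecay using 2; field_simp
  have hw : 0 ≤ |z| ^ (p - ε) * (log 2 ^ a)⁻¹ := by positivity
  rw [abs_exp_mul_hfun_exp_mul hp, mul_div_assoc, mul_div_assoc]
  gcongr |μ| * ?_
  calc |z| ^ p / log (2 + (exp (s / (p - 1)) * z) ^ 2) ^ a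
      ≤ |z| ^ p / (s / (p - 1)) ^ a
          + exp (-(ε * (s / (p - 1)) / 2)) * |z| ^ (p - ε) / log 2 ^ a :=
        rpow_div_log_two_add_sq_le (by positivity) ha hε (by positivity) z
    _ ≤ (p - 1) ^ a * |z| ^ p / s ^ a + (log 2 ^ a)⁻¹ * |z| ^ (p - ε) / s ^ a := by
        rw [div_rpow hs.le hp1.le, div_div_eq_mul_div, mul_comm (|z| ^ p)]
        gcongr _ + ?_
        convert mul_le_mul_of_nonneg_left hdecay' hw using 1 <;> ring
    _ = _ := (add_div _ _ _).symm

theorem stmt6_general (p : ℝ) (hp : 1 < p) (a : ℝ) (ha : 0 < a) (μ : ℝ)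
    (ε : ℝ) (hε0 : 0 < ε) :
    ∃ C₀ > (0:ℝ), ∃ sb > (0:ℝ), ∀ s : ℝ, sb ≤ s → ∀ z : ℝ,
      |Real.exp (-p * s / (p - 1)) * hfun p a μ (Real.exp (s / (p - 1)) * z)| ≤
        C₀ / s ^ a * (|z| ^ p + |z| ^ (p - ε)) := by
  have hp1 : 0 < p - 1 := sub_pos.2 hp
  obtain ⟨sb, hsb⟩ := ((eventually_exp_neg_mul_le_inv_rpow (c := ε / (2 * (p - 1)))
    (by positivity) a).and (eventually_gt_atTop 0)).exists_forall_of_atTop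
  have hK₁ : 0 ≤ (p - 1) ^ a := by positivity
  have hK₂ : 0 ≤ (log 2 ^ a)⁻¹ := by positivity
  refine ⟨(|μ| + 1) * ((p - 1) ^ a + (log 2 ^ a)⁻¹), by positivity, max sb 1, by positivity,
    fun s hs z => ?_⟩
  obtain ⟨hdecay, hs0⟩ := hsb s (le_of_max_le_left hs)
  have hu := rpow_nonneg (abs_nonneg z) p
  have hv := rpow_nonneg (abs_nonneg z) (p - ε)
  have hsplit : (p - 1) ^ a * |z| ^ p + (log 2 ^ a)⁻¹ * |z| ^ (p - ε) ≤
      ((p - 1) ^ a + (log 2 ^ a)⁻¹) * (|z| ^ p + |z| ^ (p - ε)) := by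
    nlinarith [mul_nonneg hK₁ hv, mul_nonneg hK₂ hu]
  calc _ ≤ |μ| * ((p - 1) ^ a * |z| ^ p + (log 2 ^ a)⁻¹ * |z| ^ (p - ε)) / s ^ a :=
        abs_exp_mul_hfun_exp_mul_le hp ha.le hε0.le hs0 hdecay μ z
    _ ≤ (|μ| + 1) * (((p - 1) ^ a + (log 2 ^ a)⁻¹) * (|z| ^ p + |z| ^ (p - ε))) / s ^ a := by
        gcongr; linarith
    _ = _ := by ring

/-- Pointwise estimate on the rescaled perturbation term `h`. -/
theorem stmt6 (p : ℝ) (hp : 1 < p) (a : ℝ) (ha : 0 < a) (μ : ℝ)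
    (ε : ℝ) (hε0 : 0 < ε) (hεp : ε ≤ p) :
    ∃ C₀ > (0:ℝ), ∃ sb > (0:ℝ), ∀ s : ℝ, sb ≤ s → ∀ z : ℝ,
      |Real.exp (-p * s / (p - 1)) * hfun p a μ (Real.exp (s / (p - 1)) * z)| ≤
        C₀ / s ^ a * (|z| ^ p + |z| ^ (p - ε)) :=
  stmt6_general p hp a ha μ ε hε0
end

section
/- There exist C₀ > 0 and s̄₀ > 0, depending only on a, μ, p, such that for all s ≥ s̄₀ and all z ∈ ℝ: | (p+1) e^{-(p+1)s/(p-1)} H( e^{s/(p-1)} z ) - e^{-ps/(p-1)} h( e^{s/(p-1)} z ) · z | ≤ (C₀ / s^{a+1}) ( |z|^{p+1} + 1 ). -/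
/-!
With `L = exp (s / (p - 1))` the quantity equals `L^{-(p+1)} ((p + 1) H(y) - h(y) y)` at
`y = L z`. Differentiating `h(y) y = μ |y|^{p+1} / log (2 + y²)^a` shows
`(p + 1) H(y) - h(y) y = -∫₀^y E`, where `E` carries one extra inverse logarithm:
`|E(η)| ≤ 2 a |μ| |η|^p / log (2 + η²)^{a+1}`. Where `η² ≥ L` that logarithm is at least
`log L = s / (p - 1)`, which yields the `|z|^{p+1} / s^{a+1}` term; where `η² < L` we only use
`|η|^p ≤ L^{p/2}`, and after rescaling this leaves `|z| exp (-p s / (2 (p - 1)))`, which decays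
faster than any power of `s`.
-/

open Real Filter

noncomputable def Hfun (p a μ : ℝ) (z : ℝ) : ℝ :=
  ∫ ξ in (0:ℝ)..z, hfun p a μ ξ

-- The defect in `(h(y) y)' = (p + 1) h(y)` caused by differentiating `log (2 + y²) ^ (-a)`.
noncomputable def hfunCorr (p a μ : ℝ) (y : ℝ) : ℝ :=
  -(2 * a * μ * |y| ^ (p + 1) * y / ((2 + y ^ 2) * log (2 + y ^ 2) ^ (a + 1)))

lemma hasDerivAt_log_two_add_sq (y : ℝ) :
    HasDerivAt (fun y => log (2 + y ^ 2)) (2 * y / (2 + y ^ 2)) y := by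
  simpa using ((hasDerivAt_pow 2 y).const_add 2).log (by positivity)

lemma hfun_mul_self {p : ℝ} (hp : 0 < p) (a μ y : ℝ) :
    hfun p a μ y * y = μ * |y| ^ (p + 1) / log (2 + y ^ 2) ^ a := by
  rw [hfun, show p + 1 = (p - 1) + 2 by ring, Real.rpow_add' (abs_nonneg y) (by linarith),
    Real.rpow_two, sq_abs]
  ring

lemma hasDerivAt_hfun_mul_self {p : ℝ} (hp : 0 < p) (a μ y : ℝ) :
    HasDerivAt (fun y => hfun p a μ y * y) ((p + 1) * hfun p a μ y + hfunCorr p a μ y) y := by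
  have hℓ := log_two_add_sq_pos y
  have hnum := (hasDerivAt_abs_rpow y (by linarith : 1 < p + 1)).const_mul μ
  have hden := (hasDerivAt_log_two_add_sq y).rpow_const (p := a) (Or.inl hℓ.ne')
  rw [funext (hfun_mul_self hp a μ)]
  refine (hnum.fun_div hden (Real.rpow_pos_of_pos hℓ a).ne').congr_deriv ?_
  simp only [hfun, hfunCorr]
  rw [Real.rpow_sub_one hℓ.ne', Real.rpow_add_one hℓ.ne', show p + 1 - 2 = p - 1 by ring]
  have : 0 < log (2 + y ^ 2) ^ a := Real.rpow_pos_of_pos hℓ a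
  field_simp
  ring

lemma continuous_log_two_add_sq_rpow (b : ℝ) :
    Continuous fun y : ℝ => log (2 + y ^ 2) ^ b :=
  ((continuous_const.add (continuous_pow 2)).log
    fun y => (by positivity : (0:ℝ) < 2 + y ^ 2).ne').rpow_const
    fun y => Or.inl (log_two_add_sq_pos y).ne'

lemma continuous_hfun {p : ℝ} (hp : 1 ≤ p) (a μ : ℝ) : Continuous (hfun p a μ) := by
  have := continuous_abs.rpow_const (p := p - 1) fun _ => Or.inr (by linarith)
  exact (((continuous_const.mul this).mul continuous_id).div
    (continuous_log_two_add_sq_rpow a) fun y => (Real.rpow_pos_of_pos (log_two_add_sq_pos y) a).ne')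

lemma continuous_hfunCorr {p : ℝ} (hp : -1 ≤ p) (a μ : ℝ) :
    Continuous (hfunCorr p a μ) := by
  have := continuous_abs.rpow_const (p := p + 1) fun _ => Or.inr (by linarith)
  refine (((continuous_const.mul this).mul continuous_id).div
    ((continuous_const.add (continuous_pow 2)).mul (continuous_log_two_add_sq_rpow _))
    fun y => ?_).neg
  have := Real.rpow_pos_of_pos (log_two_add_sq_pos y) (a + 1)
  exact (by positivity : 0 < (2 + y ^ 2) * log (2 + y ^ 2) ^ (a + 1)).ne'

lemma hfun_integral_identity {p : ℝ} (hp : 1 ≤ p) (a μ y : ℝ) :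
    (p + 1) * Hfun p a μ y - hfun p a μ y * y = -∫ η in (0:ℝ)..y, hfunCorr p a μ η := by
  have hh : IntervalIntegrable (hfun p a μ) MeasureTheory.volume 0 y :=
    (continuous_hfun hp a μ).intervalIntegrable 0 y
  have hE : IntervalIntegrable (hfunCorr p a μ) MeasureTheory.volume 0 y :=
    (continuous_hfunCorr (by linarith) a μ).intervalIntegrable 0 y
  have hFTC := intervalIntegral.integral_eq_sub_of_hasDerivAt
    (fun η _ => hasDerivAt_hfun_mul_self (by linarith : 0 < p) a μ η)
    ((hh.const_mul (p + 1)).add hE)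
  rw [intervalIntegral.integral_add (hh.const_mul _) hE,
    intervalIntegral.integral_const_mul] at hFTC
  rw [Hfun]
  linarith

lemma abs_hfunCorr_le {p : ℝ} (hp : 0 ≤ p) (a μ y : ℝ) :
    |hfunCorr p a μ y| ≤ 2 * |a| * |μ| * (|y| ^ p / log (2 + y ^ 2) ^ (a + 1)) := by
  have hℓ := Real.rpow_pos_of_pos (log_two_add_sq_pos y) (a + 1)
  have hy2 : (0:ℝ) < 2 + y ^ 2 := by positivity
  rw [hfunCorr, abs_neg, abs_div, abs_of_pos (mul_pos hy2 hℓ), abs_mul, abs_mul, abs_mul, abs_mul,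
    abs_two, abs_of_nonneg (Real.rpow_nonneg (abs_nonneg y) _),
    Real.rpow_add_one' (abs_nonneg y) (by linarith)]
  calc _ = 2 * |a| * |μ| * (|y| ^ p / log (2 + y ^ 2) ^ (a + 1)) * (|y| * |y| / (2 + y ^ 2)) := by
        field_simp
    _ ≤ 2 * |a| * |μ| * (|y| ^ p / log (2 + y ^ 2) ^ (a + 1)) * 1 := by
        gcongr
        rw [div_le_one hy2]
        nlinarith [sq_abs y]
    _ = _ := mul_one _

lemma rpow_div_log_rpow_le {p b t : ℝ} (hp : 0 ≤ p) (hb : 0 < b) (ht : 0 < t) (y : ℝ) :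
    |y| ^ p / log (2 + y ^ 2) ^ b ≤
      |y| ^ p / t ^ b + exp (p * t / 2) / log 2 ^ b := by
  have hyp := Real.rpow_nonneg (abs_nonneg y) p
  rcases le_or_gt (exp t) (y ^ 2) with hlarge | hsmall
  · have : t ≤ log (2 + y ^ 2) := (Real.le_log_iff_exp_le (by positivity)).2 (by linarith)
    have : |y| ^ p / log (2 + y ^ 2) ^ b ≤ |y| ^ p / t ^ b :=
      div_le_div_of_nonneg_left hyp (by positivity) (Real.rpow_le_rpow ht.le this hb.le)
    have : 0 ≤ exp (p * t / 2) / log 2 ^ b := by positivity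
    linarith
  · have hy : |y| ^ p ≤ exp (p * t / 2) := by
      calc |y| ^ p = (y ^ 2) ^ (p / 2) := by
            rw [← sq_abs, ← Real.rpow_natCast, ← Real.rpow_mul (abs_nonneg y)]; congr 1; ring
        _ ≤ exp t ^ (p / 2) := Real.rpow_le_rpow (sq_nonneg y) hsmall.le (by positivity)
        _ = exp (p * t / 2) := by rw [← exp_mul]; ring_nf
    have hlog2 : log 2 ≤ log (2 + y ^ 2) :=
      Real.log_le_log two_pos (by nlinarith [sq_nonneg y])
    have : |y| ^ p / log (2 + y ^ 2) ^ b ≤ exp (p * t / 2) / log 2 ^ b :=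
      div_le_div₀ (by positivity) hy (Real.rpow_pos_of_pos (Real.log_pos one_lt_two) b)
        (Real.rpow_le_rpow (Real.log_pos one_lt_two).le hlog2 hb.le)
    have : 0 ≤ |y| ^ p / t ^ b := by positivity
    linarith

lemma abs_hfun_identity_le {p : ℝ} (hp : 1 ≤ p) {a : ℝ} (ha : -1 < a) (μ : ℝ) {t : ℝ}
    (ht : 0 < t) (y : ℝ) : |(p + 1) * Hfun p a μ y - hfun p a μ y * y| ≤
      2 * |a| * |μ| * |y| * (|y| ^ p / t ^ (a + 1) + exp (p * t / 2) / log 2 ^ (a + 1)) := by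
  have hbound : ∀ η ∈ Set.uIoc (0:ℝ) y, ‖hfunCorr p a μ η‖ ≤
      2 * |a| * |μ| * (|y| ^ p / t ^ (a + 1) + exp (p * t / 2) / log 2 ^ (a + 1)) := by
    intro η hη
    have hηy : |η| ≤ |y| := by
      rcases Set.mem_uIoc.1 hη with h | h
      · rw [abs_of_pos h.1, abs_of_pos (h.1.trans_le h.2)]; exact h.2
      · rw [abs_of_nonpos h.2, abs_of_neg (h.1.trans_le h.2)]; linarith [h.1]
    calc ‖hfunCorr p a μ η‖ ≤ 2 * |a| * |μ| * (|η| ^ p / log (2 + η ^ 2) ^ (a + 1)) :=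
          abs_hfunCorr_le (by linarith) a μ η
      _ ≤ 2 * |a| * |μ| * (|η| ^ p / t ^ (a + 1) + exp (p * t / 2) / log 2 ^ (a + 1)) := by
          gcongr; exact rpow_div_log_rpow_le (by linarith) (by linarith) ht η
      _ ≤ _ := by gcongr
  have := intervalIntegral.norm_integral_le_of_norm_le_const hbound
  rw [hfun_integral_identity hp, abs_neg, ← Real.norm_eq_abs]
  rw [sub_zero] at this
  linarith

lemma abs_rescaled_hfun_identity_le {p : ℝ} (hp : 1 ≤ p) {a : ℝ} (ha : -1 < a) (μ : ℝ)
    {t : ℝ} (ht : 0 < t) (z : ℝ) :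
    |(p + 1) * exp (-(p + 1) * t) * Hfun p a μ (exp t * z)
        - exp (-p * t) * hfun p a μ (exp t * z) * z| ≤
      2 * |a| * |μ| * (|z| ^ (p + 1) / t ^ (a + 1)
        + |z| * exp (-(p * t / 2)) / log 2 ^ (a + 1)) := by
  have hscale : (p + 1) * exp (-(p + 1) * t) * Hfun p a μ (exp t * z)
        - exp (-p * t) * hfun p a μ (exp t * z) * z =
      exp (-(p + 1) * t) * ((p + 1) * Hfun p a μ (exp t * z)
        - hfun p a μ (exp t * z) * (exp t * z)) := by
    rw [show -p * t = -(p + 1) * t + t by ring, exp_add]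
    ring
  have hcancel : exp (-(p + 1) * t) * exp t * exp (t * p) = 1 := by
    rw [← exp_add, ← exp_add]; convert exp_zero using 2; ring
  have hdecay : exp (-(p + 1) * t) * exp t * exp (p * t / 2) =
      exp (-(p * t / 2)) := by
    rw [← exp_add, ← exp_add]; ring_nf
  rw [hscale, abs_mul, abs_of_pos (exp_pos _)]
  calc _ ≤ exp (-(p + 1) * t) * (2 * |a| * |μ| * |exp t * z| *
        (|exp t * z| ^ p / t ^ (a + 1) + exp (p * t / 2) / log 2 ^ (a + 1))) := by
        gcongr; exact abs_hfun_identity_le hp ha μ ht _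
    _ = _ := by
        rw [abs_mul, abs_of_pos (exp_pos t), Real.mul_rpow (exp_pos t).le (abs_nonneg z),
          ← exp_mul, Real.rpow_add_one' (abs_nonneg z) (by linarith)]
        linear_combination (2 * |a| * |μ| * |z| ^ p * |z| / t ^ (a + 1)) * hcancel
          + (2 * |a| * |μ| * |z| / log 2 ^ (a + 1)) * hdecay

lemma le_rpow_add_one {x q : ℝ} (hx : 0 ≤ x) (hq : 1 ≤ q) : x ≤ x ^ q + 1 := by
  rcases le_or_gt x 1 with hx1 | hx1
  · linarith [Real.rpow_nonneg hx q]
  · linarith [Real.self_le_rpow_of_one_le hx1.le hq]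

/-- Improved estimate on `(p+1)e^{-(p+1)s/(p-1)}H - e^{-ps/(p-1)}h·z`. -/
theorem stmt8 (p : ℝ) (hp : 1 < p) (a : ℝ) (ha : 0 < a) (μ : ℝ) :
    ∃ C₀ > (0:ℝ), ∃ sb > (0:ℝ), ∀ s : ℝ, sb ≤ s → ∀ z : ℝ,
      |(p + 1) * Real.exp (-(p + 1) * s / (p - 1)) * Hfun p a μ (Real.exp (s / (p - 1)) * z)
          - Real.exp (-p * s / (p - 1)) * hfun p a μ (Real.exp (s / (p - 1)) * z) * z| ≤
        C₀ / s ^ (a + 1) * (|z| ^ (p + 1) + 1) := by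
  have hp1 : 0 < p - 1 := by linarith
  obtain ⟨N, hN⟩ := eventually_atTop.1 <|
    (tendsto_rpow_mul_exp_neg_mul_atTop_nhds_zero (a + 1) (p / (2 * (p - 1))) (by positivity)
      ).eventually_le_const one_pos
  set K := 2 * |a| * |μ| * ((p - 1) ^ (a + 1) + 1 / log 2 ^ (a + 1)) with hK
  refine ⟨K + 1, by positivity, max N 1, by positivity, fun s hsb z => ?_⟩
  have hs : 0 < s := lt_of_lt_of_le one_pos (le_of_max_le_right hsb)
  have hS : 0 < s ^ (a + 1) := Real.rpow_pos_of_pos hs _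
  set Z := |z| ^ (p + 1) + 1
  have hZ : |z| ≤ Z := le_rpow_add_one (abs_nonneg z) (by linarith)
  have hpoly : |z| ^ (p + 1) / (s / (p - 1)) ^ (a + 1) ≤ Z * (p - 1) ^ (a + 1) / s ^ (a + 1) := by
    rw [Real.div_rpow hs.le hp1.le, div_div_eq_mul_div]
    gcongr
    linarith
  have hexp : |z| * exp (-(p * (s / (p - 1)) / 2)) ≤ Z * (1 / s ^ (a + 1)) := by
    refine mul_le_mul hZ ?_ (exp_pos _).le (by positivity)
    rw [le_div_iff₀ hS, mul_comm, show -(p * (s / (p - 1)) / 2) = -(p / (2 * (p - 1))) * s by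
      field_simp]
    exact hN s (le_of_max_le_left hsb)
  rw [show -(p + 1) * s / (p - 1) = -(p + 1) * (s / (p - 1)) by ring,
    show -p * s / (p - 1) = -p * (s / (p - 1)) by ring]
  calc _ ≤ 2 * |a| * |μ| * (|z| ^ (p + 1) / (s / (p - 1)) ^ (a + 1)
        + |z| * exp (-(p * (s / (p - 1)) / 2)) / log 2 ^ (a + 1)) :=
        abs_rescaled_hfun_identity_le hp.le (by linarith) μ (by positivity) z
    _ ≤ 2 * |a| * |μ| * (Z * (p - 1) ^ (a + 1) / s ^ (a + 1)
        + Z * (1 / s ^ (a + 1)) / log 2 ^ (a + 1)) := by gcongr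
    _ = K / s ^ (a + 1) * Z := by rw [hK]; ring
    _ ≤ (K + 1) / s ^ (a + 1) * Z := by gcongr; linarith
end

section
/- For all real q > 0, b > 0 and p > 1 there exist C > 0 and s̄₀ > 0, depending only on b, q (and p), such that for all s ≥ s̄₀ and all z ∈ ℝ: |z|^q / ( log(2 + e^{2s/(p-1)} z²) )^b ≤ (C / s^b) ( |z|^q + 1 ). -/
open Real Filter

/-!
With `t = 2s/(p-1)`, split at `|z| = exp (-t/4)`. Above it, `exp t * z ^ 2 ≥ exp (t/2)`, so the
logarithm is at least `t/2` and the quotient is `O(|z| ^ q / s ^ b)`. Below it, the logarithm is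
still at least `log 2`, while `|z| ^ q ≤ exp (-q t/4)` decays faster than any power `s ^ (-b)`.
-/

theorem half_le_log_two_add_exp_mul_sq {t z : ℝ} (hz : exp (-(t / 4)) ≤ |z|) :
    t / 2 ≤ log (2 + exp t * z ^ 2) := by
  have hz2 : exp (-(t / 2)) ≤ z ^ 2 := by
    calc exp (-(t / 2)) = exp (-(t / 4)) ^ 2 := by rw [← exp_nat_mul]; ring_nf
      _ ≤ |z| ^ 2 := by gcongr
      _ = z ^ 2 := sq_abs z
  have : exp (t / 2) ≤ 2 + exp t * z ^ 2 := by
    calc exp (t / 2) = exp t * exp (-(t / 2)) := by rw [← exp_add]; ring_nf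
      _ ≤ exp t * z ^ 2 := by gcongr
      _ ≤ 2 + exp t * z ^ 2 := by linarith
  simpa using log_le_log (exp_pos _) this

theorem log_two_le_log_two_add_mul_sq {c : ℝ} (hc : 0 ≤ c) (z : ℝ) :
    log 2 ≤ log (2 + c * z ^ 2) :=
  log_le_log two_pos (by nlinarith [sq_nonneg z])

theorem abs_rpow_div_log_rpow_le {q b t : ℝ} (hq : 0 ≤ q) (hb : 0 ≤ b) (ht : 0 < t) (z : ℝ) :
    |z| ^ q / log (2 + exp t * z ^ 2) ^ b ≤
      (2 / t) ^ b * |z| ^ q + exp (-(q / 4 * t)) / log 2 ^ b := by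
  have hlog2 : 0 < log 2 := log_pos one_lt_two
  have hL := log_two_le_log_two_add_mul_sq (exp_pos t).le z
  rcases le_or_gt (exp (-(t / 4))) |z| with hz | hz
  · have hlog : (t / 2) ^ b ≤ log (2 + exp t * z ^ 2) ^ b := by
      gcongr; exact half_le_log_two_add_exp_mul_sq hz
    calc |z| ^ q / log (2 + exp t * z ^ 2) ^ b ≤ |z| ^ q / (t / 2) ^ b := by gcongr
      _ = (2 / t) ^ b * |z| ^ q := by
        rw [div_eq_inv_mul, ← inv_rpow (by positivity), inv_div]
      _ ≤ _ := le_add_of_nonneg_right (by positivity)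
  · have hzq : |z| ^ q ≤ exp (-(q / 4 * t)) := by
      calc |z| ^ q ≤ exp (-(t / 4)) ^ q := by gcongr
        _ = exp (-(q / 4 * t)) := by rw [← exp_mul]; ring_nf
    calc |z| ^ q / log (2 + exp t * z ^ 2) ^ b ≤ exp (-(q / 4 * t)) / log 2 ^ b := by
          gcongr
      _ ≤ _ := le_add_of_nonneg_left (by positivity)

/-- Basic logarithmic estimate. -/
theorem stmt9 (q b p : ℝ) (hq : 0 < q) (hb : 0 < b) (hp : 1 < p) :
    ∃ C > (0:ℝ), ∃ sb > (0:ℝ), ∀ s : ℝ, sb ≤ s → ∀ z : ℝ,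
      |z| ^ q / (Real.log (2 + Real.exp (2 * s / (p - 1)) * z ^ 2)) ^ b ≤
        C / s ^ b * (|z| ^ q + 1) := by
  have hp1 : 0 < p - 1 := sub_pos.mpr hp
  have hm : 0 < q / (2 * (p - 1)) := by positivity
  obtain ⟨s₀, hs₀⟩ := eventually_atTop.mp
    ((tendsto_rpow_mul_exp_neg_mul_atTop_nhds_zero b _ hm).eventually (eventually_le_nhds one_pos))
  refine ⟨(p - 1) ^ b + (log 2)⁻¹ ^ b, by positivity, max s₀ 1, by positivity, fun s hs z => ?_⟩
  have hs1 : 1 ≤ s := le_of_max_le_right hs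
  have hs0 : 0 < s := by linarith
  have hdecay : exp (-(q / (2 * (p - 1)) * s)) ≤ 1 / s ^ b := by
    rw [le_div_iff₀ (by positivity), mul_comm, ← neg_mul]
    exact hs₀ s (le_of_max_le_left hs)
  calc |z| ^ q / log (2 + exp (2 * s / (p - 1)) * z ^ 2) ^ b
      ≤ (2 / (2 * s / (p - 1))) ^ b * |z| ^ q + exp (-(q / 4 * (2 * s / (p - 1)))) / log 2 ^ b :=
        abs_rpow_div_log_rpow_le hq.le hb.le (by positivity) z
    _ = (p - 1) ^ b / s ^ b * |z| ^ q + (log 2)⁻¹ ^ b * exp (-(q / (2 * (p - 1)) * s)) := by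
        rw [show 2 / (2 * s / (p - 1)) = (p - 1) / s by field_simp,
          show q / 4 * (2 * s / (p - 1)) = q / (2 * (p - 1)) * s by field_simp; ring,
          div_rpow hp1.le hs0.le, inv_rpow (log_pos one_lt_two).le, div_eq_inv_mul _ (log 2 ^ b)]
    _ ≤ (p - 1) ^ b / s ^ b * |z| ^ q + (log 2)⁻¹ ^ b * (1 / s ^ b) := by gcongr
    _ ≤ ((p - 1) ^ b + (log 2)⁻¹ ^ b) / s ^ b * (|z| ^ q + 1) := by
        have : 0 ≤ (log 2)⁻¹ ^ b / s ^ b * |z| ^ q + (p - 1) ^ b / s ^ b := by positivity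
        rw [mul_one_div, add_div, add_mul, mul_add, mul_add]
        linarith
end

section
/- Let C > 0, R > 0 and δ ∈ (0,1). Then there exist θ = θ(δ, C, R) > 0 and ε₀ = ε₀(δ, C, R) > 0 such that the following holds: for every ε ∈ (0, ε₀) and every continuous function 𝓗 : [0, ∞) → [0, ∞) satisfying, for all τ > 0, 𝓗(τ) ≤ ε e^τ + C ∫₀^{max(τ - R, 0)} e^{τ - s} 𝓗(s)² / (1 - e^{-(τ - s - R)})^δ ds, and for every τ ≥ 0 with ε e^τ ≤ θ, one has 𝓗(τ) ≤ 2 ε e^τ. -/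
/-!
On `[0, R]` the integral is over an empty range, so `H τ ≤ ε e^τ` there (at `τ = 0` by
continuity). Then bootstrap in steps of length `R`: if `H s ≤ 2 ε e^s` on `[0, τ - R]`, the
integral term is at most
`4 C ε² e^τ ∫₀^{τ-R} e^s (1 - e^{s-(τ-R)})^{-δ} ds ≤ 4 C ε² e^{2τ-R} / (1-δ)`,
which is at most `ε e^τ` once `ε e^τ ≤ θ := (1 - δ) e^R / (4 C)`. The smallness condition
`ε e^s ≤ θ` is inherited by all `s ≤ τ`, so the induction closes.
-/

open Real MeasureTheory Set intervalIntegral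

section SingularKernel

variable {δ T : ℝ}

theorem hasDerivAt_one_sub_exp_sub_rpow_one_sub {x : ℝ} (hδ : δ < 1) (hx : x < T) :
    HasDerivAt (fun s => -(exp T * (1 - exp (s - T)) ^ (1 - δ)) / (1 - δ))
      (exp x * (1 - exp (x - T)) ^ (-δ)) x := by
  have hbase : 0 < 1 - exp (x - T) := sub_pos.2 (exp_lt_one_iff.2 (by linarith))
  have h := ((((hasDerivAt_id x).sub_const T).exp.const_sub 1).rpow_const
    (p := 1 - δ) (Or.inl hbase.ne')).const_mul (exp T) |>.neg.div_const (1 - δ)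
  refine h.congr_deriv ?_
  rw [show 1 - δ - 1 = -δ by ring, show exp x = exp T * exp (x - T) by rw [← exp_add]; ring_nf]
  field_simp [(sub_pos.2 hδ).ne']
  simp

theorem continuous_one_sub_exp_sub_rpow_one_sub (hδ : δ < 1) :
    Continuous fun s => -(exp T * (1 - exp (s - T)) ^ (1 - δ)) / (1 - δ) := by
  have : Continuous fun s => (1 - exp (s - T)) ^ (1 - δ) :=
    (by fun_prop : Continuous fun s => 1 - exp (s - T)).rpow_const fun _ => Or.inr (by linarith)
  fun_prop

theorem intervalIntegrable_exp_mul_one_sub_exp_sub_rpow (hδ : δ < 1) (hT : 0 ≤ T) :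
    IntervalIntegrable (fun s => exp s * (1 - exp (s - T)) ^ (-δ)) volume 0 T := by
  rw [intervalIntegrable_iff_integrableOn_Ioc_of_le hT]
  refine integrableOn_deriv_of_nonneg (continuous_one_sub_exp_sub_rpow_one_sub hδ).continuousOn
    (fun x hx => hasDerivAt_one_sub_exp_sub_rpow_one_sub hδ hx.2) fun x hx => ?_
  have : 0 ≤ 1 - exp (x - T) := sub_nonneg.2 (exp_le_one_iff.2 (by linarith [hx.2]))
  positivity

theorem integral_exp_mul_one_sub_exp_sub_rpow (hδ : δ < 1) (hT : 0 ≤ T) :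
    ∫ s in 0..T, exp s * (1 - exp (s - T)) ^ (-δ) =
      exp T * (1 - exp (-T)) ^ (1 - δ) / (1 - δ) := by
  rw [integral_eq_sub_of_hasDerivAt_of_le hT
    (continuous_one_sub_exp_sub_rpow_one_sub hδ).continuousOn
    (fun x hx => hasDerivAt_one_sub_exp_sub_rpow_one_sub hδ hx.2)
    (intervalIntegrable_exp_mul_one_sub_exp_sub_rpow hδ hT)]
  simp [zero_rpow (sub_pos.2 hδ).ne']
  ring

theorem integral_exp_mul_one_sub_exp_sub_rpow_le (hδ : δ < 1) (hT : 0 ≤ T) :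
    ∫ s in 0..T, exp s * (1 - exp (s - T)) ^ (-δ) ≤ exp T / (1 - δ) := by
  rw [integral_exp_mul_one_sub_exp_sub_rpow hδ hT]
  have h0 : 0 ≤ 1 - exp (-T) := sub_nonneg.2 (exp_le_one_iff.2 (by linarith))
  have h1 : (1 - exp (-T)) ^ (1 - δ) ≤ 1 :=
    rpow_le_one h0 (by linarith [exp_pos (-T)]) (by linarith)
  exact div_le_div_of_nonneg_right (mul_le_of_le_one_right (exp_pos T).le h1)
    (by linarith)

end SingularKernel

theorem integral_exp_mul_sq_div_one_sub_exp_rpow_le {δ R τ M : ℝ} {H : ℝ → ℝ} (hδ : δ < 1)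
    (hRτ : R ≤ τ) (hHc : ContinuousOn H (Icc 0 (τ - R)))
    (hH0 : ∀ s ∈ Icc 0 (τ - R), 0 ≤ H s) (hHM : ∀ s ∈ Icc 0 (τ - R), H s ≤ M * exp s) :
    ∫ s in 0..τ - R, exp (τ - s) * H s ^ 2 / (1 - exp (-(τ - s - R))) ^ δ ≤
      M ^ 2 * exp τ * exp (τ - R) / (1 - δ) := by
  set T := τ - R with hT
  have hT0 : 0 ≤ T := sub_nonneg.2 hRτ
  have hbase : ∀ s, 1 - exp (-(τ - s - R)) = 1 - exp (s - T) := fun s => by congr 2; rw [hT]; ring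
  have hpointwise : ∀ s ∈ Icc 0 T, 0 ≤ exp (τ - s) * H s ^ 2 / (1 - exp (-(τ - s - R))) ^ δ ∧
      exp (τ - s) * H s ^ 2 / (1 - exp (-(τ - s - R))) ^ δ ≤
        M ^ 2 * exp τ * (exp s * (1 - exp (s - T)) ^ (-δ)) := by
    intro s hs
    have hb : 0 ≤ 1 - exp (s - T) := sub_nonneg.2 (exp_le_one_iff.2 (by linarith [hs.2]))
    have hsq : H s ^ 2 ≤ (M * exp s) ^ 2 := pow_le_pow_left₀ (hH0 s hs) (hHM s hs) 2
    have hnum : exp (τ - s) * H s ^ 2 ≤ M ^ 2 * exp τ * exp s :=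
      calc exp (τ - s) * H s ^ 2 ≤ exp (τ - s) * (M * exp s) ^ 2 := by gcongr
        _ = M ^ 2 * exp τ * exp s := by rw [exp_sub]; field_simp
    rw [hbase, rpow_neg hb, ← mul_assoc, ← div_eq_mul_inv]
    exact ⟨by positivity, div_le_div_of_nonneg_right hnum (rpow_nonneg hb δ)⟩
  have hg := (intervalIntegrable_exp_mul_one_sub_exp_sub_rpow hδ hT0).const_mul (M ^ 2 * exp τ)
  have hf : IntervalIntegrable
      (fun s => exp (τ - s) * H s ^ 2 / (1 - exp (-(τ - s - R))) ^ δ) volume 0 T := by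
    refine hg.mono_fun' ?_ ?_ <;> rw [uIoc_of_le hT0]
    · have : ContinuousOn (fun s => exp (τ - s) * H s ^ 2) (Ioc 0 T) :=
        (by fun_prop : ContinuousOn (fun s => exp (τ - s) * H s ^ 2) (Icc 0 T)).mono
          Ioc_subset_Icc_self
      have hden : Measurable fun s : ℝ => (1 - exp (-(τ - s - R))) ^ δ := by fun_prop
      exact ((this.aemeasurable measurableSet_Ioc).div hden.aemeasurable).aestronglyMeasurable
    · refine ae_restrict_of_forall_mem measurableSet_Ioc fun s hs => ?_
      obtain ⟨h0, hle⟩ := hpointwise s (Ioc_subset_Icc_self hs)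
      simpa only [norm_of_nonneg h0] using hle
  calc ∫ s in 0..T, exp (τ - s) * H s ^ 2 / (1 - exp (-(τ - s - R))) ^ δ
      ≤ ∫ s in 0..T, M ^ 2 * exp τ * (exp s * (1 - exp (s - T)) ^ (-δ)) :=
        integral_mono_on hT0 hf hg fun s hs => (hpointwise s hs).2
    _ = M ^ 2 * exp τ * ∫ s in 0..T, exp s * (1 - exp (s - T)) ^ (-δ) := integral_const_mul _ _
    _ ≤ M ^ 2 * exp τ * (exp T / (1 - δ)) := by
        gcongr; exact integral_exp_mul_one_sub_exp_sub_rpow_le hδ hT0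
    _ = M ^ 2 * exp τ * exp T / (1 - δ) := by ring

theorem forall_nonneg_of_forall_Icc_of_step {P : ℝ → Prop} {R : ℝ} (hR : 0 < R)
    (hbase : ∀ τ ∈ Icc 0 R, P τ) (hstep : ∀ τ, R < τ → (∀ s ∈ Icc 0 (τ - R), P s) → P τ) :
    ∀ τ, 0 ≤ τ → P τ := by
  suffices h : ∀ n : ℕ, ∀ τ ∈ Icc 0 (n * R), P τ by
    intro τ hτ
    obtain ⟨n, hn⟩ := exists_nat_ge (τ / R)
    exact h n τ ⟨hτ, (div_le_iff₀ hR).1 hn⟩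
  intro n
  induction n with
  | zero => exact fun τ hτ => hbase τ ⟨hτ.1, hτ.2.trans (by simpa using hR.le)⟩
  | succ n ih =>
    intro τ hτ
    rcases le_or_gt τ R with hτR | hRτ
    · exact hbase τ ⟨hτ.1, hτR⟩
    · refine hstep τ hRτ fun s hs => ih s ⟨hs.1, ?_⟩
      push_cast at hτ
      linarith [hτ.2, hs.2]

/-- Gronwall-type lemma of Velázquez. -/
theorem stmt12 (C R δ : ℝ) (hC : 0 < C) (hR : 0 < R) (hδ : δ ∈ Set.Ioo (0:ℝ) 1) :
    ∃ θ > (0:ℝ), ∃ ε₀ > (0:ℝ), ∀ ε : ℝ, 0 < ε → ε < ε₀ →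
      ∀ H : ℝ → ℝ, ContinuousOn H (Set.Ici 0) → (∀ τ, 0 ≤ τ → 0 ≤ H τ) →
        (∀ τ : ℝ, 0 < τ →
          H τ ≤ ε * Real.exp τ +
            C * ∫ s in (0:ℝ)..max (τ - R) 0,
              Real.exp (τ - s) * H s ^ 2 / (1 - Real.exp (-(τ - s - R))) ^ δ) →
        ∀ τ : ℝ, 0 ≤ τ → ε * Real.exp τ ≤ θ → H τ ≤ 2 * ε * Real.exp τ := by
  have hδ' : 0 < 1 - δ := sub_pos.2 hδ.2
  refine ⟨(1 - δ) * exp R / (4 * C), by positivity, 1, one_pos, fun ε hε _ H hHc hH0 hH => ?_⟩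
  have hsmall : ∀ τ ∈ Ioc 0 R, H τ ≤ ε * exp τ := fun τ hτ => by
    simpa [max_eq_right (sub_nonpos.2 hτ.2)] using hH τ hτ.1
  have hzero : H 0 ≤ ε * exp 0 :=
    ContinuousWithinAt.closure_le (by rw [closure_Ioc hR.ne]; exact left_mem_Icc.2 hR.le)
      ((hHc 0 self_mem_Ici).mono (Ioc_subset_Icc_self.trans Icc_subset_Ici_self))
      (by fun_prop) hsmall
  refine forall_nonneg_of_forall_Icc_of_step hR (fun τ hτ _ => ?_) fun τ hRτ hprev hτθ => ?_
  · have : H τ ≤ ε * exp τ := by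
      rcases hτ.1.eq_or_lt with rfl | hτ0
      exacts [hzero, hsmall τ ⟨hτ0, hτ.2⟩]
    linarith [mul_pos hε (exp_pos τ)]
  have hθ : ∀ s ≤ τ, ε * exp s ≤ (1 - δ) * exp R / (4 * C) := fun s hs =>
    (mul_le_mul_of_nonneg_left (exp_le_exp.2 hs) hε.le).trans hτθ
  have hI := integral_exp_mul_sq_div_one_sub_exp_rpow_le hδ.2 hRτ.le
    (hHc.mono Icc_subset_Ici_self) (fun s hs => hH0 s hs.1)
    fun s hs => hprev s hs (hθ s (by linarith [hs.2]))
  have hCI : C * ((2 * ε) ^ 2 * exp τ * exp (τ - R) / (1 - δ)) ≤ ε * exp τ :=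
    calc C * ((2 * ε) ^ 2 * exp τ * exp (τ - R) / (1 - δ))
        = ε * exp τ * (4 * C / ((1 - δ) * exp R) * (ε * exp τ)) := by
          rw [exp_sub]; field_simp; ring
      _ ≤ ε * exp τ * (4 * C / ((1 - δ) * exp R) * ((1 - δ) * exp R / (4 * C))) := by gcongr
      _ = ε * exp τ := by field_simp
  have := hH τ (by linarith)
  rw [max_eq_left (by linarith)] at this
  linarith [mul_le_mul_of_nonneg_left hI hC.le]
end

section
/- Let φ : [s₀, ∞) → (0, ∞) be a differentiable positive solution of the ordinary differential equation φ'(s) = -φ(s)/(p-1) + φ(s)^p + μ φ(s)^p / ( log(2 + e^{2s/(p-1)} φ(s)²) )^a, and assume φ(s) → κ as s → ∞. Then, setting η(s) = (κ / φ(s))^{p-1} - 1 (so that φ(s) = κ (1 + η(s))^{-1/(p-1)}), one has lim_{s → ∞} s^a η(s) = μ ((p-1)/2)^a. -/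
/-!
Write `κ = (p-1)^{-1/(p-1)}`, `η = (κ/φ)^{p-1} - 1` and `g(s) = μ / log(2 + e^{2s/(p-1)} φ(s)²)^a`.
Since `κ^{p-1} = 1/(p-1)`, the equation for `φ` becomes the linear equation `η' = η - g`, and
since the logarithm is `2s/(p-1) + O(1)`, we have `s^a g(s) → μ ((p-1)/2)^a`. For the linear
equation with `η → 0`, L'Hôpital's rule applied to `e^{-s} η(s) / (s^{-a} e^{-s})` transfers the
asymptotics of `g` to `η`: the quotient of derivatives is `s^a g(s) / (1 + a/s)`.
-/

open Real Filter Topology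

lemma rpow_neg_one_div_rpow_self {q : ℝ} (hq : 0 < q) : (q ^ (-(1 / q))) ^ q = q⁻¹ := by
  rw [← rpow_mul hq.le, show -(1 / q) * q = -1 by field_simp, rpow_neg_one]

lemma HasDerivAt.const_div_rpow {f : ℝ → ℝ} {f' κ q x : ℝ} (hf : HasDerivAt f f' x)
    (hκ : 0 < κ) (hx : 0 < f x) :
    HasDerivAt (fun y => (κ / f y) ^ q) (-q * (κ / f x) ^ q * (f' / f x)) x := by
  have hκx : 0 < κ / f x := div_pos hκ hx
  refine (((hasDerivAt_const x κ).div hf hx.ne').rpow_const (Or.inl hκx.ne')).congr_deriv ?_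
  simp only [Pi.div_apply]
  rw [rpow_sub_one hκx.ne']
  field_simp
  ring

lemma tendsto_const_div_rpow_sub_one {α : Type*} {l : Filter α} {f : α → ℝ} {κ : ℝ} (q : ℝ)
    (hf : Tendsto f l (𝓝 κ)) (hκ : κ ≠ 0) :
    Tendsto (fun x => (κ / f x) ^ q - 1) l (𝓝 0) := by
  have hdiv : Tendsto (fun x => κ / f x) l (𝓝 1) := by
    have := (tendsto_const_nhds (x := κ)).div hf hκ
    rwa [div_self hκ] at this
  simpa using ((continuousAt_rpow_const 1 q (Or.inl one_ne_zero)).tendsto.comp hdiv).sub_const 1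

lemma tendsto_log_add_exp_mul_div_self {b c m : ℝ} {ψ : ℝ → ℝ} (hb : 0 < b)
    (hψ : Tendsto ψ atTop (𝓝 m)) (hm : 0 < m) :
    Tendsto (fun s => log (c + exp (b * s) * ψ s) / s) atTop (𝓝 b) := by
  have hrest : Tendsto (fun s => c * exp (-(b * s)) + ψ s) atTop (𝓝 m) := by
    have : Tendsto (fun s => exp (-(b * s))) atTop (𝓝 0) :=
      tendsto_exp_neg_atTop_nhds_zero.comp (tendsto_id.const_mul_atTop hb)
    simpa using (this.const_mul c).add hψ
  have hlog : Tendsto (fun s => b + log (c * exp (-(b * s)) + ψ s) / s) atTop (𝓝 (b + 0)) :=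
    tendsto_const_nhds.add (((continuousAt_log hm.ne').tendsto.comp hrest).div_atTop tendsto_id)
  rw [add_zero] at hlog
  refine hlog.congr' ?_
  filter_upwards [eventually_gt_atTop 0, hrest.eventually (lt_mem_nhds hm)] with s hs hpos
  have hsplit : c + exp (b * s) * ψ s = exp (b * s) * (c * exp (-(b * s)) + ψ s) := by
    rw [mul_add, mul_left_comm, ← exp_add, add_neg_cancel, exp_zero, mul_one]
  rw [hsplit, log_mul (exp_pos _).ne' hpos.ne', log_exp]
  field_simp

lemma tendsto_rpow_mul_of_hasDerivAt_self_sub {a c : ℝ} {η g : ℝ → ℝ}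
    (hη : ∀ᶠ s in atTop, HasDerivAt η (η s - g s) s) (hη0 : Tendsto η atTop (𝓝 0))
    (hg : Tendsto (fun s => s ^ a * g s) atTop (𝓝 c)) :
    Tendsto (fun s => s ^ a * η s) atTop (𝓝 c) := by
  have hexp (s : ℝ) : HasDerivAt (fun t => exp (-t)) (-exp (-s)) s := by
    simpa using (hasDerivAt_neg s).exp
  have hnum : ∀ᶠ s in atTop, HasDerivAt (fun t => exp (-t) * η t) (-(exp (-s) * g s)) s := by
    filter_upwards [hη] with s hs
    exact ((hexp s).mul hs).congr_deriv (by ring)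
  have hden : ∀ᶠ s in atTop, HasDerivAt (fun t => t ^ (-a) * exp (-t))
      (-(s ^ (-a) * exp (-s) * (1 + a / s))) s := by
    filter_upwards [eventually_gt_atTop 0] with s hs
    refine ((hasDerivAt_rpow_const (p := -a) (Or.inl hs.ne')).mul (hexp s)).congr_deriv ?_
    rw [rpow_sub_one hs.ne']
    field_simp
    ring
  have hone : Tendsto (fun s : ℝ => 1 + a / s) atTop (𝓝 1) := by
    simpa using (tendsto_const_nhds (x := (1 : ℝ))).add
      ((tendsto_const_nhds (x := a)).div_atTop tendsto_id)
  have hden_ne : ∀ᶠ s in atTop, -(s ^ (-a) * exp (-s) * (1 + a / s)) ≠ 0 := by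
    filter_upwards [eventually_gt_atTop 0, hone.eventually (lt_mem_nhds one_pos)] with s hs h1
    exact neg_ne_zero.mpr (by positivity)
  have hnum0 : Tendsto (fun t => exp (-t) * η t) atTop (𝓝 0) := by
    simpa using tendsto_exp_neg_atTop_nhds_zero.mul hη0
  have hden0 : Tendsto (fun t : ℝ => t ^ (-a) * exp (-t)) atTop (𝓝 0) := by
    simpa using tendsto_rpow_mul_exp_neg_mul_atTop_nhds_zero (-a) 1 one_pos
  have hratio : Tendsto (fun s => -(exp (-s) * g s) / -(s ^ (-a) * exp (-s) * (1 + a / s)))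
      atTop (𝓝 c) := by
    refine (div_one c ▸ hg.div hone one_ne_zero).congr' ?_
    filter_upwards [eventually_gt_atTop 0] with s hs
    rw [Pi.div_apply, rpow_neg hs.le]
    field_simp
  refine (HasDerivAt.lhopital_zero_atTop hnum hden hden_ne hnum0 hden0 hratio).congr' ?_
  filter_upwards [eventually_gt_atTop 0] with s hs
  rw [rpow_neg hs.le]
  field_simp

lemma hasDerivAt_const_div_rpow_sub_one_of_ode {p r s : ℝ} {φ : ℝ → ℝ} (hp : 1 < p)
    (hφ : 0 < φ s) (hode : HasDerivAt φ (-(φ s) / (p - 1) + φ s ^ p + r * φ s ^ p) s) :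
    HasDerivAt (fun t => ((p - 1) ^ (-(1 / (p - 1))) / φ t) ^ (p - 1) - 1)
      ((((p - 1) ^ (-(1 / (p - 1))) / φ s) ^ (p - 1) - 1) - r) s := by
  have hp1 : 0 < p - 1 := by linarith
  set κ := (p - 1) ^ (-(1 / (p - 1)))
  have hκ : 0 < κ := rpow_pos_of_pos hp1 _
  have hκφ : (κ / φ s) ^ (p - 1) * φ s ^ (p - 1) * (p - 1) = 1 := by
    rw [div_rpow hκ.le hφ.le, div_mul_cancel₀ _ (rpow_pos_of_pos hφ _).ne',
      rpow_neg_one_div_rpow_self hp1, inv_mul_cancel₀ hp1.ne']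
  have hφp : φ s ^ p = φ s ^ (p - 1) * φ s := by
    rw [← rpow_add_one hφ.ne', sub_add_cancel]
  refine ((hode.const_div_rpow hκ hφ).sub_const 1).congr_deriv ?_
  rw [hφp]
  field_simp
  linear_combination -(1 + r) * hκφ

lemma tendsto_rpow_mul_div_log_two_add_exp_rpow {q a μ m : ℝ} {φ : ℝ → ℝ} (hq : 0 < q)
    (hφ : Tendsto φ atTop (𝓝 m)) (hm : m ≠ 0) :
    Tendsto (fun s => s ^ a * (μ / log (2 + exp (2 * s / q) * φ s ^ 2) ^ a)) atTop
      (𝓝 (μ * (q / 2) ^ a)) := by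
  set L := fun s => log (2 + exp (2 * s / q) * φ s ^ 2)
  have hL : Tendsto (fun s => L s / s) atTop (𝓝 (2 / q)) := by
    refine (tendsto_log_add_exp_mul_div_self (c := 2) (div_pos two_pos hq) (hφ.pow 2)
      (by positivity)).congr fun s => ?_
    simp only [L]
    ring_nf
  have hsL : Tendsto (fun s => (s / L s) ^ a) atTop (𝓝 ((q / 2) ^ a)) := by
    have := hL.inv₀ (div_pos two_pos hq).ne'
    simp only [inv_div] at this
    exact (continuousAt_rpow_const _ _ (Or.inl (by positivity))).tendsto.comp this
  refine (hsL.const_mul μ).congr' ?_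
  filter_upwards [eventually_gt_atTop 0] with s hs
  have hLpos : 0 < L s := log_pos (lt_add_of_lt_of_nonneg one_lt_two (by positivity))
  rw [div_rpow hs.le hLpos.le]
  simp only [L]
  field_simp

theorem stmt13_general (p : ℝ) (hp : 1 < p) (a : ℝ) (μ : ℝ)
    (s₀ : ℝ) (φ : ℝ → ℝ)
    (hode : ∀ s, s₀ ≤ s → HasDerivAt φ
      (-(φ s) / (p - 1) + φ s ^ p +
        μ * φ s ^ p / (Real.log (2 + Real.exp (2 * s / (p - 1)) * φ s ^ 2)) ^ a) s)
    (hlim : Tendsto φ atTop (nhds ((p - 1) ^ (-(1 / (p - 1)))))) :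
    Tendsto (fun s : ℝ => s ^ a * (((p - 1) ^ (-(1 / (p - 1))) / φ s) ^ (p - 1) - 1))
      atTop (nhds (μ * ((p - 1) / 2) ^ a)) := by
  have hκ : 0 < (p - 1) ^ (-(1 / (p - 1))) := rpow_pos_of_pos (by linarith) _
  refine tendsto_rpow_mul_of_hasDerivAt_self_sub ?_
    (tendsto_const_div_rpow_sub_one _ hlim hκ.ne')
    (tendsto_rpow_mul_div_log_two_add_exp_rpow (by linarith) hlim hκ.ne')
  filter_upwards [eventually_ge_atTop s₀, hlim.eventually (lt_mem_nhds hκ)] with s hs hφ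
  refine hasDerivAt_const_div_rpow_sub_one_of_ode hp hφ ?_
  rw [← mul_div_right_comm]
  exact hode s hs

/-- Asymptotic expansion of the ODE solution `φ`:
if `φ` solves `φ' = -φ/(p-1) + φ^p + μ φ^p / (log(2 + e^{2s/(p-1)} φ²))^a` and `φ(s) → κ`,
then `η(s) = (κ/φ(s))^{p-1} - 1` satisfies `s^a η(s) → μ ((p-1)/2)^a`. -/
theorem stmt13 (p : ℝ) (hp : 1 < p) (a : ℝ) (ha : 0 < a) (μ : ℝ)
    (s₀ : ℝ) (φ : ℝ → ℝ) (hpos : ∀ s, s₀ ≤ s → 0 < φ s)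
    (hode : ∀ s, s₀ ≤ s → HasDerivAt φ
      (-(φ s) / (p - 1) + φ s ^ p +
        μ * φ s ^ p / (Real.log (2 + Real.exp (2 * s / (p - 1)) * φ s ^ 2)) ^ a) s)
    (hlim : Tendsto φ atTop (nhds ((p - 1) ^ (-(1 / (p - 1)))))) :
    Tendsto (fun s : ℝ => s ^ a * (((p - 1) ^ (-(1 / (p - 1))) / φ s) ^ (p - 1) - 1))
      atTop (nhds (μ * ((p - 1) / 2) ^ a)) :=
  stmt13_general p hp a μ s₀ φ hode hlim
end

section
/- Let φ : [s₀, ∞) → (0, ∞) be a differentiable positive solution of φ'(s) = -φ/(p-1) + φ^p + e^{-ps/(p-1)} h(e^{s/(p-1)} φ) with φ(s) → κ as s → ∞, and define ω(s) = p ( φ(s)^{p-1} - κ^{p-1} ) + e^{-s} h'( e^{s/(p-1)} φ(s) ), where h' denotes the derivative of h. Then there exist C > 0 and s₁ ≥ s₀ such that |ω(s)| ≤ C s^{-(a+1)} for all s ≥ s₁. -/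
open Real Filter

/-!
Write `q = p - 1`, `Φ = e^{s/q} φ` and `ℓ = log (2 + Φ²)^{-a}`. The equation reads
`φ' = -φ/q + φ^p (1 + μ ℓ)`, and the Bernoulli substitution `W = φ^{-q}` linearises it:
`W' = W - q (1 + μ ℓ)`. So the defect `J = W - q - q μ ℓ` solves `J' = J + R` with `R = -q μ ℓ'`.
Since `φ → κ > 0`, `log (2 + Φ²) ≥ s/q` eventually, whence `R = O(s^{-(a+1)})`; and the only
solution of `J' = J + R` tending to `0` is `J(s) = -∫_s^∞ e^{s-x} R(x) dx = O(s^{-(a+1)})`.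
Finally `ω = -(p/q) φ^q J - μ a φ^q (2Φ²/(2+Φ²)) log (2 + Φ²)^{-(a+1)}`, and `κ^q = 1/q`.
-/

open Topology Asymptotics Set

noncomputable def logFactor (z : ℝ) : ℝ := log (2 + z ^ 2)

lemma logFactor_pos (z : ℝ) : 0 < logFactor z :=
  log_pos (by nlinarith [sq_nonneg z])

lemma two_mul_log_le_logFactor {z : ℝ} (hz : 0 < z) : 2 * log z ≤ logFactor z :=
  calc 2 * log z = log (z ^ 2) := by rw [log_pow]; norm_num
    _ ≤ logFactor z := log_le_log (by positivity) (by linarith)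

lemma isBigO_two_mul_sq_div_two_add_sq (f : ℝ → ℝ) (l : Filter ℝ) :
    (fun s => 2 * f s ^ 2 / (2 + f s ^ 2)) =O[l] fun _ => (1 : ℝ) := by
  refine IsBigO.of_bound 2 (Eventually.of_forall fun s => ?_)
  rw [norm_one, mul_one, norm_of_nonneg (by positivity), div_le_iff₀ (by positivity)]
  nlinarith

lemma HasDerivAt.logFactor {f : ℝ → ℝ} {f' x : ℝ} (hf : HasDerivAt f f' x) :
    HasDerivAt (fun t => logFactor (f t)) (2 * f x * f' / (2 + f x ^ 2)) x := by
  have h : HasDerivAt (fun t => 2 + f t ^ 2) (2 * f x * f') x := by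
    simpa [mul_comm] using (hf.fun_pow 2).const_add 2
  exact h.log (by positivity)

lemma hfun_of_pos {p a μ z : ℝ} (hz : 0 < z) :
    hfun p a μ z = μ * z ^ p * logFactor z ^ (-a) := by
  rw [hfun, abs_of_pos hz, mul_assoc μ, ← rpow_add_one hz.ne', sub_add_cancel,
    rpow_neg (logFactor_pos z).le, div_eq_mul_inv, logFactor]

lemma hasDerivAt_hfun {p a μ x : ℝ} (hx : 0 < x) :
    HasDerivAt (hfun p a μ) (μ * x ^ (p - 1) *
      (p * logFactor x ^ (-a) - a * (2 * x ^ 2 / (2 + x ^ 2)) * logFactor x ^ (-(a + 1)))) x := by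
  have hloc : hfun p a μ =ᶠ[𝓝 x] fun z => μ * z ^ p * logFactor z ^ (-a) :=
    eventually_of_mem (Ioi_mem_nhds hx) fun z hz => hfun_of_pos hz
  have h := ((hasDerivAt_rpow_const (p := p) (Or.inl hx.ne')).const_mul μ).mul
    ((hasDerivAt_id x).logFactor.rpow_const (p := -a) (Or.inl (logFactor_pos x).ne'))
  refine (h.congr_of_eventuallyEq hloc).congr_deriv ?_
  rw [← sub_add_cancel p 1, rpow_add_one hx.ne', add_sub_cancel_right,
    show -a - 1 = -(a + 1) by ring]
  simp only [id]
  field_simp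
  ring

lemma exp_mul_hfun_exp_mul {p a μ s x : ℝ} (hx : 0 < x) :
    exp (-p * s / (p - 1)) * hfun p a μ (exp (s / (p - 1)) * x) =
      x ^ p * (μ * logFactor (exp (s / (p - 1)) * x) ^ (-a)) := by
  have hexp : exp (-p * s / (p - 1)) * exp (s / (p - 1) * p) = 1 := by
    rw [← exp_add, ← exp_zero]
    ring_nf
  rw [hfun_of_pos (by positivity), mul_rpow (exp_pos _).le hx.le, ← exp_mul]
  linear_combination μ * x ^ p * logFactor (exp (s / (p - 1)) * x) ^ (-a) * hexp

lemma hasDerivAt_exp_mul_of_bernoulli {p m s : ℝ} {φ : ℝ → ℝ}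
    (hφ : HasDerivAt φ (-φ s / (p - 1) + φ s ^ p * m) s) :
    HasDerivAt (fun t => exp (t / (p - 1)) * φ t) (exp (s / (p - 1)) * φ s ^ p * m) s := by
  have he : HasDerivAt (fun t => exp (t / (p - 1))) (exp (s / (p - 1)) * (1 / (p - 1))) s := by
    simpa using ((hasDerivAt_id s).div_const (p - 1)).exp
  exact (he.mul hφ).congr_deriv (by ring)

lemma hasDerivAt_logFactor_exp_mul {p m s : ℝ} {φ : ℝ → ℝ} (hφs : 0 < φ s)
    (hφ : HasDerivAt φ (-φ s / (p - 1) + φ s ^ p * m) s) :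
    HasDerivAt (fun t => logFactor (exp (t / (p - 1)) * φ t))
      (2 * (exp (s / (p - 1)) * φ s) ^ 2 / (2 + (exp (s / (p - 1)) * φ s) ^ 2) *
        (φ s ^ (p - 1) * m)) s := by
  refine (hasDerivAt_exp_mul_of_bernoulli hφ).logFactor.congr_deriv ?_
  rw [rpow_sub_one hφs.ne']
  field_simp

lemma hasDerivAt_rpow_neg_of_bernoulli {p m s : ℝ} {φ : ℝ → ℝ} (hp : p ≠ 1) (hφs : 0 < φ s)
    (hφ : HasDerivAt φ (-φ s / (p - 1) + φ s ^ p * m) s) :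
    HasDerivAt (fun t => φ t ^ (-(p - 1))) (φ s ^ (-(p - 1)) - (p - 1) * m) s := by
  have hq : p - 1 ≠ 0 := sub_ne_zero.mpr hp
  have hcancel : φ s ^ p * φ s ^ (-(p - 1)) = φ s := by
    rw [← rpow_add hφs]
    norm_num
  refine (hφ.rpow_const (Or.inl hφs.ne')).congr_deriv ?_
  rw [rpow_sub_one hφs.ne']
  field_simp
  linear_combination (-(p - 1) * m) * hcancel

lemma nonneg_of_hasDerivAt_nonpos_of_tendsto_zero {F F' : ℝ → ℝ} {s : ℝ}
    (hF : ∀ x ≥ s, HasDerivAt F (F' x) x) (hF' : ∀ x ≥ s, F' x ≤ 0)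
    (hF0 : Tendsto F atTop (𝓝 0)) : 0 ≤ F s := by
  have hanti : AntitoneOn F (Ici s) := by
    refine antitoneOn_of_hasDerivWithinAt_nonpos (f' := F') (convex_Ici s)
      (fun x hx => (hF x hx).continuousAt.continuousWithinAt) (fun x hx => ?_) fun x hx => ?_
    all_goals rw [interior_Ici] at hx
    exacts [(hF x hx.le).hasDerivWithinAt, hF' x hx.le]
  exact le_of_tendsto hF0 (eventually_atTop.2 ⟨s, fun x hx => hanti self_mem_Ici hx hx⟩)

lemma abs_le_of_abs_deriv_le_neg_deriv {f g f' g' : ℝ → ℝ} {s : ℝ}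
    (hf : ∀ x ≥ s, HasDerivAt f (f' x) x) (hg : ∀ x ≥ s, HasDerivAt g (g' x) x)
    (hfg : ∀ x ≥ s, |f' x| ≤ -g' x)
    (hf0 : Tendsto f atTop (𝓝 0)) (hg0 : Tendsto g atTop (𝓝 0)) : |f s| ≤ g s := by
  have hadd := nonneg_of_hasDerivAt_nonpos_of_tendsto_zero (fun x hx => (hg x hx).fun_add (hf x hx))
    (fun x hx => by linarith [le_abs_self (f' x), hfg x hx]) (by simpa using hg0.add hf0)
  have hsub := nonneg_of_hasDerivAt_nonpos_of_tendsto_zero (fun x hx => (hg x hx).fun_sub (hf x hx))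
    (fun x hx => by linarith [neg_abs_le (f' x), hfg x hx]) (by simpa using hg0.sub hf0)
  exact abs_le.2 ⟨by linarith, by linarith⟩

lemma abs_le_of_hasDerivAt_self_add {J R : ℝ → ℝ} {s b : ℝ}
    (hJ : ∀ x ≥ s, HasDerivAt J (J x + R x) x) (hJ0 : Tendsto J atTop (𝓝 0))
    (hR : ∀ x ≥ s, |R x| ≤ b) : |J s| ≤ b := by
  have hK : ∀ x ≥ s, HasDerivAt (fun t => exp (-t) * J t) (exp (-x) * R x) x := fun x hx =>
    (((hasDerivAt_neg x).exp).mul (hJ x hx)).congr_deriv (by ring)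
  have hG : ∀ x ≥ s, HasDerivAt (fun t => b * exp (-t)) (-(b * exp (-x))) x := fun x _ =>
    (((hasDerivAt_neg x).exp).const_mul b).congr_deriv (by ring)
  have hKG := abs_le_of_abs_deriv_le_neg_deriv hK hG
    (fun x hx => by
      rw [abs_mul, abs_of_pos (exp_pos _), neg_neg, mul_comm b]
      exact mul_le_mul_of_nonneg_left (hR x hx) (exp_pos _).le)
    (by simpa using tendsto_exp_neg_atTop_nhds_zero.mul hJ0)
    (by simpa using tendsto_exp_neg_atTop_nhds_zero.const_mul b)
  rw [abs_mul, abs_of_pos (exp_pos _), mul_comm b] at hKG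
  exact le_of_mul_le_mul_left hKG (exp_pos _)

lemma isBigO_rpow_neg_of_hasDerivAt_self_add {J R : ℝ → ℝ} {b : ℝ} (hb : 0 ≤ b)
    (hJ : ∀ᶠ x in atTop, HasDerivAt J (J x + R x) x) (hJ0 : Tendsto J atTop (𝓝 0))
    (hR : R =O[atTop] fun x => x ^ (-b)) : J =O[atTop] fun x => x ^ (-b) := by
  obtain ⟨c, hc, hRc⟩ := hR.exists_pos
  obtain ⟨N, hN⟩ := eventually_atTop.1 (hJ.and (hRc.bound.and (eventually_gt_atTop 0)))
  refine IsBigO.of_bound c (eventually_atTop.2 ⟨N, fun s hs => ?_⟩)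
  have hs0 := (hN s hs).2.2
  rw [norm_eq_abs, norm_of_nonneg (rpow_nonneg hs0.le _)]
  refine abs_le_of_hasDerivAt_self_add (fun x hx => (hN x (hs.trans hx)).1) hJ0 fun x hx => ?_
  obtain ⟨-, hRx, hx0⟩ := hN x (hs.trans hx)
  rw [norm_eq_abs, norm_of_nonneg (rpow_nonneg hx0.le _)] at hRx
  exact hRx.trans (mul_le_mul_of_nonneg_left (rpow_le_rpow_of_nonpos hs0 hx (by linarith)) hc.le)

lemma isBigO_rpow_neg_of_eventually_div_le {L : ℝ → ℝ} {c b : ℝ} (hc : 0 < c) (hb : 0 ≤ b)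
    (hL : ∀ᶠ s in atTop, s / c ≤ L s) : (fun s => L s ^ (-b)) =O[atTop] fun s => s ^ (-b) := by
  refine IsBigO.of_bound (c ^ b) ?_
  filter_upwards [hL, eventually_gt_atTop 0] with s hs hs0
  have hsc : 0 < s / c := div_pos hs0 hc
  rw [norm_of_nonneg (rpow_nonneg (hsc.le.trans hs) _), norm_of_nonneg (rpow_nonneg hs0.le _)]
  calc L s ^ (-b) ≤ (s / c) ^ (-b) := rpow_le_rpow_of_nonpos hsc hs (by linarith)
    _ = c ^ b * s ^ (-b) := by rw [div_rpow hs0.le hc.le, rpow_neg hc.le, div_inv_eq_mul, mul_comm]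

lemma exists_pos_forall_abs_le_of_isBigO {f : ℝ → ℝ} {b : ℝ} (h : f =O[atTop] fun s => s ^ b)
    (s₀ : ℝ) : ∃ C > (0 : ℝ), ∃ s₁ : ℝ, s₀ ≤ s₁ ∧ ∀ s, s₁ ≤ s → |f s| ≤ C * s ^ b := by
  obtain ⟨C, hC, hCf⟩ := h.exists_pos
  obtain ⟨N, hN⟩ := eventually_atTop.1 (hCf.bound.and (eventually_ge_atTop 0))
  refine ⟨C, hC, max s₀ N, le_max_left _ _, fun s hs => ?_⟩
  obtain ⟨hfs, hs0⟩ := hN s ((le_max_right _ _).trans hs)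
  rwa [norm_eq_abs, norm_of_nonneg (rpow_nonneg hs0 _)] at hfs

lemma eventually_div_le_logFactor_exp_mul {p κ : ℝ} {φ : ℝ → ℝ} (hp : 1 < p) (hκ : 0 < κ)
    (hlim : Tendsto φ atTop (𝓝 κ)) :
    ∀ᶠ s in atTop, s / (p - 1) ≤ logFactor (exp (s / (p - 1)) * φ s) := by
  have hq : 0 < p - 1 := sub_pos.2 hp
  filter_upwards [hlim.eventually (lt_mem_nhds (half_lt_self hκ)),
    eventually_ge_atTop (-2 * (p - 1) * log (κ / 2))] with s hφ hs
  have hφ0 : 0 < φ s := (half_pos hκ).trans hφ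
  have h1 := two_mul_log_le_logFactor (mul_pos (exp_pos (s / (p - 1))) hφ0)
  rw [log_mul (exp_pos _).ne' hφ0.ne', log_exp] at h1
  have h2 : log (κ / 2) ≤ log (φ s) := log_le_log (half_pos hκ) hφ.le
  have h3 : -2 * log (κ / 2) ≤ s / (p - 1) := by rw [le_div_iff₀ hq]; linarith
  linarith

noncomputable def bernoulliDefect (p a μ : ℝ) (φ : ℝ → ℝ) (s : ℝ) : ℝ :=
  φ s ^ (-(p - 1)) - (p - 1) - (p - 1) * μ * logFactor (exp (s / (p - 1)) * φ s) ^ (-a)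

theorem isBigO_bernoulliDefect {p a μ κ : ℝ} {φ : ℝ → ℝ} (hp : 1 < p) (ha : 0 < a)
    (hκ : 0 < κ) (hκp : κ ^ (-(p - 1)) = p - 1) (hlim : Tendsto φ atTop (𝓝 κ))
    (hode : ∀ᶠ s in atTop, HasDerivAt φ
      (-φ s / (p - 1) + φ s ^ p * (1 + μ * logFactor (exp (s / (p - 1)) * φ s) ^ (-a))) s) :
    bernoulliDefect p a μ φ =O[atTop] fun s => s ^ (-(a + 1)) := by
  set L : ℝ → ℝ := fun s => logFactor (exp (s / (p - 1)) * φ s)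
  set L' : ℝ → ℝ := fun s => 2 * (exp (s / (p - 1)) * φ s) ^ 2 /
    (2 + (exp (s / (p - 1)) * φ s) ^ 2) * (φ s ^ (p - 1) * (1 + μ * L s ^ (-a)))
  have hq : 0 < p - 1 := sub_pos.2 hp
  have hL_ge := eventually_div_le_logFactor_exp_mul hp hκ hlim
  have hL_top : Tendsto L atTop atTop :=
    tendsto_atTop_mono' atTop hL_ge (tendsto_id.atTop_div_const hq)
  have hℓ : Tendsto (fun s => L s ^ (-a)) atTop (𝓝 0) := (tendsto_rpow_neg_atTop ha).comp hL_top
  have hJ0 : Tendsto (bernoulliDefect p a μ φ) atTop (𝓝 0) := by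
    have := ((hlim.rpow_const (p := -(p - 1)) (Or.inl hκ.ne')).sub_const (p - 1)).sub
      (hℓ.const_mul ((p - 1) * μ))
    rwa [hκp, sub_self, mul_zero, sub_zero] at this
  have hJ' : ∀ᶠ s in atTop,
      HasDerivAt (bernoulliDefect p a μ φ)
        (bernoulliDefect p a μ φ s + (p - 1) * μ * a * L s ^ (-(a + 1)) * L' s) s := by
    filter_upwards [hode, hlim.eventually (lt_mem_nhds hκ)] with s hφ' hφ0
    have hW := hasDerivAt_rpow_neg_of_bernoulli hp.ne' hφ0 hφ'
    have hℓ' := (hasDerivAt_logFactor_exp_mul hφ0 hφ').rpow_const (p := -a)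
      (Or.inl (logFactor_pos _).ne')
    refine ((hW.sub_const (p - 1)).fun_sub (hℓ'.const_mul ((p - 1) * μ))).congr_deriv ?_
    rw [bernoulliDefect, show -a - 1 = -(a + 1) by ring]
    ring
  have hL'_bdd : L' =O[atTop] fun _ => (1 : ℝ) := by
    simpa only [mul_one] using (isBigO_two_mul_sq_div_two_add_sq _ _).mul
      (((hlim.rpow_const (p := p - 1) (Or.inl hκ.ne')).isBigO_one ℝ).mul
        (((hℓ.const_mul μ).const_add 1).isBigO_one ℝ))
  have hR : (fun s => (p - 1) * μ * a * L s ^ (-(a + 1)) * L' s) =O[atTop]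
      fun s => s ^ (-(a + 1)) := by
    simpa only [mul_one] using ((isBigO_rpow_neg_of_eventually_div_le (b := a + 1) hq
      (by linarith) hL_ge).const_mul_left
      ((p - 1) * μ * a)).mul hL'_bdd
  exact isBigO_rpow_neg_of_hasDerivAt_self_add (by linarith) hJ' hJ0 hR

lemma omega_eq_bernoulliDefect {p a μ s : ℝ} {φ : ℝ → ℝ} (hp : p ≠ 1) (hφ : 0 < φ s) :
    p * (φ s ^ (p - 1) - (p - 1)⁻¹) + exp (-s) * deriv (hfun p a μ) (exp (s / (p - 1)) * φ s) =
      -(p / (p - 1) * φ s ^ (p - 1) * bernoulliDefect p a μ φ s) -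
        μ * a * φ s ^ (p - 1) *
          (2 * (exp (s / (p - 1)) * φ s) ^ 2 / (2 + (exp (s / (p - 1)) * φ s) ^ 2)) *
          logFactor (exp (s / (p - 1)) * φ s) ^ (-(a + 1)) := by
  have hq : p - 1 ≠ 0 := sub_ne_zero.2 hp
  have hscale : exp (-s) * (exp (s / (p - 1)) * φ s) ^ (p - 1) = φ s ^ (p - 1) := by
    rw [mul_rpow (exp_pos _).le hφ.le, ← exp_mul, div_mul_cancel₀ s hq, ← mul_assoc, ← exp_add,
      neg_add_cancel, exp_zero, one_mul]
  have hqq : (p - 1) * (p - 1)⁻¹ = 1 := mul_inv_cancel₀ hq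
  have hinv : φ s ^ (p - 1) * φ s ^ (-(p - 1)) = 1 := by
    rw [← rpow_add hφ]
    simp
  rw [(hasDerivAt_hfun (by positivity)).deriv, bernoulliDefect]
  linear_combination μ * (p * logFactor (exp (s / (p - 1)) * φ s) ^ (-a) -
      a * (2 * (exp (s / (p - 1)) * φ s) ^ 2 / (2 + (exp (s / (p - 1)) * φ s) ^ 2)) *
        logFactor (exp (s / (p - 1)) * φ s) ^ (-(a + 1))) * hscale + p / (p - 1) * hinv -
    p * φ s ^ (p - 1) * (1 + μ * logFactor (exp (s / (p - 1)) * φ s) ^ (-a)) * hqq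

theorem isBigO_omega {p a μ κ : ℝ} {φ : ℝ → ℝ} (hp : 1 < p) (ha : 0 < a)
    (hκ : 0 < κ) (hκp : κ ^ (-(p - 1)) = p - 1) (hlim : Tendsto φ atTop (𝓝 κ))
    (hode : ∀ᶠ s in atTop, HasDerivAt φ
      (-φ s / (p - 1) + φ s ^ p * (1 + μ * logFactor (exp (s / (p - 1)) * φ s) ^ (-a))) s) :
    (fun s => p * (φ s ^ (p - 1) - (p - 1)⁻¹) +
        exp (-s) * deriv (hfun p a μ) (exp (s / (p - 1)) * φ s)) =O[atTop]
      fun s => s ^ (-(a + 1)) := by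
  have hq : 0 < p - 1 := sub_pos.2 hp
  have hφq := (hlim.rpow_const (p := p - 1) (Or.inl hκ.ne')).isBigO_one ℝ
  have hL := isBigO_rpow_neg_of_eventually_div_le (b := a + 1) hq (by linarith)
    (eventually_div_le_logFactor_exp_mul hp hκ hlim)
  have hφqθ := (hφq.const_mul_left (μ * a)).mul
    (isBigO_two_mul_sq_div_two_add_sq (fun s => exp (s / (p - 1)) * φ s) atTop)
  simp only [mul_one] at hφqθ
  have hmain := ((hφq.const_mul_left (p / (p - 1))).mul
    (isBigO_bernoulliDefect hp ha hκ hκp hlim hode)).neg_left.sub (hφqθ.mul hL)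
  simp only [one_mul] at hmain
  refine hmain.congr' ?_ EventuallyEq.rfl
  filter_upwards [hlim.eventually (lt_mem_nhds hκ)] with s hφs
  exact (omega_eq_bernoulliDefect hp.ne' hφs).symm

theorem stmt14_general (p : ℝ) (hp : 1 < p) (a : ℝ) (ha : 0 < a) (μ : ℝ)
    (κ : ℝ) (hκ : κ = (p - 1) ^ (-(1 / (p - 1))))
    (s₀ : ℝ) (φ : ℝ → ℝ)
    (hode : ∀ s, s₀ ≤ s → HasDerivAt φ
      (-(φ s) / (p - 1) + φ s ^ p +
        Real.exp (-p * s / (p - 1)) * hfun p a μ (Real.exp (s / (p - 1)) * φ s)) s)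
    (hlim : Tendsto φ atTop (nhds κ)) :
    ∃ C > (0:ℝ), ∃ s₁ : ℝ, s₀ ≤ s₁ ∧ ∀ s, s₁ ≤ s →
      |p * (φ s ^ (p - 1) - κ ^ (p - 1)) +
          Real.exp (-s) * deriv (hfun p a μ) (Real.exp (s / (p - 1)) * φ s)| ≤
        C * s ^ (-(a + 1)) := by
  have hq : 0 < p - 1 := sub_pos.2 hp
  have hκ0 : 0 < κ := hκ ▸ rpow_pos_of_pos hq _
  have hκq : κ ^ (p - 1) = (p - 1)⁻¹ := by
    rw [hκ, ← rpow_mul hq.le, neg_mul, one_div_mul_cancel hq.ne', rpow_neg_one]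
  have hκq' : κ ^ (-(p - 1)) = p - 1 := by rw [rpow_neg hκ0.le, hκq, inv_inv]
  have hode' : ∀ᶠ s in atTop, HasDerivAt φ
      (-φ s / (p - 1) + φ s ^ p * (1 + μ * logFactor (exp (s / (p - 1)) * φ s) ^ (-a))) s := by
    filter_upwards [hlim.eventually (lt_mem_nhds hκ0), eventually_ge_atTop s₀] with s hφs hs
    exact (hode s hs).congr_deriv (by rw [exp_mul_hfun_exp_mul hφs]; ring)
  rw [hκq]
  exact exists_pos_forall_abs_le_of_isBigO (isBigO_omega hp ha hκ0 hκq' hlim hode') s₀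

/-- Estimate of `ω(s) = p(φ(s)^{p-1} - κ^{p-1}) + e^{-s} h'(e^{s/(p-1)} φ(s))`. -/
theorem stmt14 (p : ℝ) (hp : 1 < p) (a : ℝ) (ha : 0 < a) (μ : ℝ)
    (κ : ℝ) (hκ : κ = (p - 1) ^ (-(1 / (p - 1))))
    (s₀ : ℝ) (φ : ℝ → ℝ) (hpos : ∀ s, s₀ ≤ s → 0 < φ s)
    (hode : ∀ s, s₀ ≤ s → HasDerivAt φ
      (-(φ s) / (p - 1) + φ s ^ p +
        Real.exp (-p * s / (p - 1)) * hfun p a μ (Real.exp (s / (p - 1)) * φ s)) s)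
    (hlim : Tendsto φ atTop (nhds κ)) :
    ∃ C > (0:ℝ), ∃ s₁ : ℝ, s₀ ≤ s₁ ∧ ∀ s, s₁ ≤ s →
      |p * (φ s ^ (p - 1) - κ ^ (p - 1)) +
          Real.exp (-s) * deriv (hfun p a μ) (Real.exp (s / (p - 1)) * φ s)| ≤
        C * s ^ (-(a + 1)) :=
  stmt14_general p hp a ha μ κ hκ s₀ φ hode hlim
end

section
/- Let a > 0, γ > 0, C ≥ 0 and s₀ > 0. Let E : [s₀, ∞) → ℝ be differentiable and D : [s₀, ∞) → [0, ∞) be continuous, and assume that for all s ≥ s₀: E'(s) ≤ -D(s) + γ s^{-(a+1)} E(s) + C s^{-(a+1)}. Then for every θ ≥ (C/a) e^{(γ/a) s₀^{-a}}, the function J(s) = E(s) e^{(γ/a) s^{-a}} + θ s^{-a} satisfies J(s₂) - J(s₁) ≤ - ∫_{s₁}^{s₂} D(s) ds for all s₀ ≤ s₁ ≤ s₂. -/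
open Real Set

/-!
With the integrating factor `w(s) = exp ((γ / a) s^{-a})`, whose logarithmic derivative is
`-γ s^{-(a+1)}`, the functional `J = E w + θ s^{-a}` has derivative
`w (E' - γ s^{-(a+1)} E) - a θ s^{-(a+1)} ≤ -w D + (C w - a θ) s^{-(a+1)}`.
Since `w` decreases from `w(s₀)` and stays `≥ 1`, the choice of `θ` makes this at most `-D`,
and integrating from `s₁` to `s₂` gives the claim.
-/

theorem hasDerivAt_mul_exp_rpow_neg_add {a γ θ s E' : ℝ} {E : ℝ → ℝ} (ha : a ≠ 0)
    (hs : 0 < s) (hE : HasDerivAt E E' s) :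
    HasDerivAt (fun s => E s * exp (γ / a * s ^ (-a)) + θ * s ^ (-a))
      (exp (γ / a * s ^ (-a)) * (E' - γ * s ^ (-(a + 1)) * E s) - a * θ * s ^ (-(a + 1))) s := by
  have hp : HasDerivAt (fun x : ℝ => x ^ (-a)) (-a * s ^ (-a - 1)) s :=
    hasDerivAt_rpow_const (Or.inl hs.ne')
  refine ((hE.mul (hp.const_mul (γ / a)).exp).add (hp.const_mul θ)).congr_deriv ?_
  rw [show -(a + 1) = -a - 1 by ring]
  field_simp
  ring

theorem antitoneOn_exp_mul_rpow_neg {a c : ℝ} (ha : 0 ≤ a) (hc : 0 ≤ c) :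
    AntitoneOn (fun s : ℝ => exp (c * s ^ (-a))) (Ioi 0) := fun _ hx _ _ hxy =>
  exp_le_exp.mpr <| mul_le_mul_of_nonneg_left
    (rpow_le_rpow_of_nonpos hx hxy (neg_nonpos.mpr ha)) hc

theorem weighted_deriv_le_neg {w E E' D p a γ C θ : ℝ} (hw : 1 ≤ w) (hD : 0 ≤ D)
    (hp : 0 ≤ p) (hCw : C * w ≤ a * θ) (hE' : E' ≤ -D + γ * p * E + C * p) :
    w * (E' - γ * p * E) - a * θ * p ≤ -D :=
  calc w * (E' - γ * p * E) - a * θ * p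
      ≤ w * (-D + C * p) - a * θ * p := by gcongr; linarith
    _ = -D - (w - 1) * D + (C * w - a * θ) * p := by ring
    _ ≤ -D := by
      have hwD := mul_nonneg (sub_nonneg.mpr hw) hD
      have hCwp := mul_nonpos_of_nonpos_of_nonneg (sub_nonpos.mpr hCw) hp
      linarith

/-- Abstract monotonicity argument for the Lyapunov functional. -/
theorem stmt19 (a γ C s₀ : ℝ) (ha : 0 < a) (hγ : 0 < γ) (hC : 0 ≤ C) (hs₀ : 0 < s₀)
    (E D : ℝ → ℝ) (hE : ∀ s, s₀ ≤ s → DifferentiableAt ℝ E s)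
    (hD : ContinuousOn D (Set.Ici s₀)) (hDnn : ∀ s, s₀ ≤ s → 0 ≤ D s)
    (hineq : ∀ s, s₀ ≤ s → deriv E s ≤ -D s + γ * s ^ (-(a + 1)) * E s + C * s ^ (-(a + 1)))
    (θ : ℝ) (hθ : C / a * Real.exp ((γ / a) * s₀ ^ (-a)) ≤ θ) :
    ∀ s₁ s₂ : ℝ, s₀ ≤ s₁ → s₁ ≤ s₂ →
      (E s₂ * Real.exp ((γ / a) * s₂ ^ (-a)) + θ * s₂ ^ (-a)) -
          (E s₁ * Real.exp ((γ / a) * s₁ ^ (-a)) + θ * s₁ ^ (-a)) ≤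
        -∫ s in s₁..s₂, D s := by
  intro s₁ s₂ hs₁ hs₁₂
  have hIcc : Icc s₁ s₂ ⊆ Ici s₀ := fun s hs => hs₁.trans hs.1
  have hpos : ∀ s, s₀ ≤ s → 0 < s := fun s hs => hs₀.trans_le hs
  have hJ := fun s (hs : s₀ ≤ s) =>
    hasDerivAt_mul_exp_rpow_neg_add (γ := γ) (θ := θ) ha.ne' (hpos s hs) (hE s hs).hasDerivAt
  have hCw : ∀ s, s₀ ≤ s → C * exp (γ / a * s ^ (-a)) ≤ a * θ := fun s hs =>
    calc C * exp (γ / a * s ^ (-a)) ≤ a * (C / a * exp (γ / a * s₀ ^ (-a))) := by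
          rw [← mul_assoc, mul_div_cancel₀ C ha.ne']
          exact mul_le_mul_of_nonneg_left (antitoneOn_exp_mul_rpow_neg ha.le (by positivity)
            (hpos s₀ le_rfl) (hpos s hs) hs) hC
      _ ≤ a * θ := mul_le_mul_of_nonneg_left hθ ha.le
  have hJ_le := intervalIntegral.sub_le_integral_of_hasDeriv_right_of_le hs₁₂
    (fun s hs => (hJ s (hIcc hs)).continuousAt.continuousWithinAt)
    (fun s hs => (hJ s (hIcc (Ioo_subset_Icc_self hs))).hasDerivWithinAt)
    ((hD.mono hIcc).integrableOn_Icc.neg) fun s hs =>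
      have hs' : s₀ ≤ s := hIcc (Ioo_subset_Icc_self hs)
      have hs_pos := hpos s hs'
      weighted_deriv_le_neg (one_le_exp (by positivity : 0 ≤ γ / a * s ^ (-a))) (hDnn s hs')
        (by positivity : 0 ≤ s ^ (-(a + 1))) (hCw s hs') (hineq s hs')
  simpa only [Pi.neg_apply, intervalIntegral.integral_neg] using hJ_le
end
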